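/- arXiv:2508.13540 — 3 statements merged into one kernel-verified Lean document; each statement's English description precedes it below -/
import Mathlib

section
/- Let D ≥ 2 and let Γ be the cycle graph on ZMod n. Let Aut(Γ) denote the group of graph automorphisms of Γ, acting diagonally on triples by g·(x,y,z) = (g x, g y, g z). Then the number of orbits of this action on (ZMod n)³ equals 2D² + 2 if n = 2D, and equals 2D² + 2D + 1 if n = 2D + 1. -/
/-- Adjacency in the cycle graph on `ZMod n`. -/
def cycAdj (n : ℕ) (x y : ZMod n) : Prop := x - y = 1 ∨ y - x = 1

/-- The automorphism group of the cycle graph on `ZMod n`, as a subgroup of the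
permutation group of the vertex set.  It acts diagonally on triples via the product
of the natural permutation actions. -/
def cycAut (n : ℕ) : Subgroup (Equiv.Perm (ZMod n)) where
  carrier := {g | ∀ x y, cycAdj n (g x) (g y) ↔ cycAdj n x y}
  one_mem' := by intro x y; simp
  mul_mem' := by
    intro a b ha hb x y
    simp only [Equiv.Perm.mul_apply]
    exact (ha (b x) (b y)).trans (hb x y)
  inv_mem' := by
    intro a ha x y
    have h := ha (a⁻¹ x) (a⁻¹ y)
    simpa [Equiv.apply_symm_apply] using h.symm

/-!
An automorphism of the cycle `ZMod n` moves each edge `{x, x + 1}` to an edge, so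
`g (x + 1) - g x = ±1`; injectivity forbids the sign from flipping between consecutive steps,
hence `g x = g 0 ± x`.  Two triples are therefore in the same orbit exactly when their
consecutive differences `(y - x, z - y)` agree up to a global sign, and the orbits are the
orbits of `ℤˣ = {±1}` on `(ZMod n)²`.  By Burnside's lemma their number is half of
`n² + t²`, where `t`, the number of solutions of `-x = x` in `ZMod n`, is `2` for even `n`
and `1` for odd `n`.
-/

open MulAction

theorem Nat.card_quotient_eq_of_surjective {α β : Type*} {r : Setoid α} {s : Setoid β}
    (f : α → β) (hf : Function.Surjective f) (hrel : ∀ a b, r a b ↔ s (f a) (f b)) :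
    Nat.card (Quotient r) = Nat.card (Quotient s) := by
  refine Nat.card_congr (Equiv.ofBijective (Quotient.map f fun a b => (hrel a b).1) ⟨?_, ?_⟩)
  · rintro ⟨a⟩ ⟨b⟩ h
    exact Quotient.sound ((hrel a b).2 (Quotient.exact h))
  · rintro ⟨y⟩
    obtain ⟨x, rfl⟩ := hf y
    exact ⟨⟦x⟧, rfl⟩

theorem two_mul_card_orbitRel_units_int (A : Type*) [AddGroup A] [Finite A] :
    2 * Nat.card (orbitRel.Quotient ℤˣ A) = Nat.card A + Nat.card {a : A // -a = a} := by
  classical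
  have := Fintype.ofFinite A
  have burnside := sum_card_fixedBy_eq_card_orbits_mul_card_group ℤˣ A
  rw [Fintype.sum_eq_add 1 (-1) (by decide)
    (fun u hu => (hu.2 ((Int.units_eq_one_or u).resolve_left hu.1)).elim),
    Fintype.card_units_int] at burnside
  simp only [Fintype.card_eq_nat_card, fixedBy_one_eq_univ, Nat.card_univ] at burnside
  rw [mul_comm, ← burnside]
  congr 1
  exact Nat.card_congr (Equiv.subtypeEquivRight fun a => by simp [Units.smul_def])

theorem card_neg_eq_self_prod (A B : Type*) [AddGroup A] [AddGroup B] :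
    Nat.card {p : A × B // -p = p} = Nat.card {a : A // -a = a} * Nat.card {b : B // -b = b} := by
  rw [← Nat.card_prod]
  exact Nat.card_congr ((Equiv.subtypeEquivRight fun p => by simp [Prod.ext_iff]).trans
    (Equiv.subtypeProdEquivProd))

theorem ZMod.card_neg_eq_self (n : ℕ) [NeZero n] :
    Nat.card {x : ZMod n // -x = x} = if Even n then 2 else 1 := by
  change Nat.card {x : ZMod n | -x = x} = _
  split_ifs with hn
  · obtain ⟨m, rfl⟩ := hn
    have hm : m ≠ 0 := by rintro rfl; exact NeZero.ne (0 + 0) rfl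
    have hval : (m : ZMod (m + m)).val = m := ZMod.val_natCast_of_lt (by omega)
    have hfix : {x : ZMod (m + m) | -x = x} = {0, (m : ZMod (m + m))} := by
      ext x
      simp only [Set.mem_ofPred_eq, Set.mem_insert_iff, Set.mem_singleton_iff,
        ZMod.neg_eq_self_iff]
      refine or_congr_right ⟨fun h => ?_, fun h => by rw [h, hval]; ring⟩
      rw [← ZMod.natCast_zmod_val x]
      congr 1
      omega
    rw [hfix, Nat.card_coe_set_eq, Set.ncard_pair]
    intro h
    rw [← h, ZMod.val_zero] at hval
    exact hm hval.symm
  · have hfix : {x : ZMod n | -x = x} = {0} := by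
      ext x
      simp only [Set.mem_ofPred_eq, Set.mem_singleton_iff, ZMod.neg_eq_self_iff]
      exact or_iff_left fun h => hn ⟨x.val, by omega⟩
    rw [hfix, Nat.card_coe_set_eq, Set.ncard_singleton]

theorem eq_add_intCast_mul_of_sub_eq {R : Type*} [CommRing R] {f : R → R} {d : R}
    (h : ∀ x, f (x + 1) - f x = d) (k : ℤ) : f k = f 0 + k * d := by
  induction k using Int.induction_on with
  | zero => simp
  | succ i ih => push_cast at ih ⊢; linear_combination ih + h i
  | pred i ih =>
    have := h (-i - 1)
    rw [sub_add_cancel] at this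
    push_cast at ih ⊢
    linear_combination ih - this

def consecutiveDiffs {A : Type*} [AddGroup A] (p : A × A × A) : A × A :=
  (p.2.1 - p.1, p.2.2 - p.2.1)

theorem consecutiveDiffs_surjective {A : Type*} [AddGroup A] :
    Function.Surjective (consecutiveDiffs : A × A × A → A × A) :=
  fun d => ⟨(0, d.1, d.2 + d.1), by simp [consecutiveDiffs]⟩

section cycAut

variable {n : ℕ} {g : Equiv.Perm (ZMod n)}

theorem cycAut.apply_add_one_sub_eq_one_or (hg : g ∈ cycAut n) (x : ZMod n) :
    g (x + 1) - g x = 1 ∨ g (x + 1) - g x = -1 := by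
  rcases (hg (x + 1) x).mpr (Or.inl (by ring)) with h | h
  · exact Or.inl h
  · exact Or.inr (by linear_combination -h)

theorem cycAut.apply_add_one_sub_eq (hg : g ∈ cycAut n) (x : ZMod n) :
    g (x + 1) - g x = g 1 - g 0 := by
  suffices step : ∀ y, g (y + 1 + 1) - g (y + 1) = g (y + 1) - g y by
    obtain ⟨k, rfl⟩ := ZMod.intCast_surjective x
    simpa using eq_add_intCast_mul_of_sub_eq (f := fun y => g (y + 1) - g y)
      (fun y => sub_eq_zero.mpr (step y)) k
  intro y
  rcases apply_add_one_sub_eq_one_or hg (y + 1) with h₂ | h₂ <;>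
  rcases apply_add_one_sub_eq_one_or hg y with h₁ | h₁
  · rw [h₁, h₂]
  · -- a turn back would make `g` identify `y + 2` with `y`, forcing `2 = 0`
    have h := g.injective (show g (y + 1 + 1) = g y by linear_combination h₁ + h₂)
    rw [h₁, h₂]; linear_combination h
  · have h := g.injective (show g (y + 1 + 1) = g y by linear_combination h₁ + h₂)
    rw [h₁, h₂]; linear_combination -h
  · rw [h₁, h₂]

theorem cycAut.exists_units_apply_eq (hg : g ∈ cycAut n) :
    ∃ u : ℤˣ, ∀ x, g x = g 0 + u • x := by
  have affine (x : ZMod n) : g x = g 0 + x * (g 1 - g 0) := by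
    obtain ⟨k, rfl⟩ := ZMod.intCast_surjective x
    exact eq_add_intCast_mul_of_sub_eq (apply_add_one_sub_eq hg) k
  rcases apply_add_one_sub_eq_one_or hg 0 with h | h <;> rw [zero_add] at h
  · exact ⟨1, fun x => by rw [affine, h, one_smul, mul_one]⟩
  · exact ⟨-1, fun x => by rw [affine, h, Units.neg_smul, one_smul, mul_neg_one]⟩

theorem toPerm_trans_addLeft_mem_cycAut (t : ZMod n) (u : ℤˣ) :
    (MulAction.toPerm u).trans (Equiv.addLeft t) ∈ cycAut n := by
  intro x y
  rcases Int.units_eq_one_or u with rfl | rfl <;> simp [cycAdj, neg_add_eq_sub, or_comm]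

theorem cycAut_orbitRel_iff (p q : ZMod n × ZMod n × ZMod n) :
    orbitRel (cycAut n) _ p q ↔ orbitRel ℤˣ _ (consecutiveDiffs p) (consecutiveDiffs q) := by
  have smul_eq (g : cycAut n) (q : ZMod n × ZMod n × ZMod n) :
      g • q = (g.1 q.1, g.1 q.2.1, g.1 q.2.2) := rfl
  simp only [orbitRel_apply, mem_orbit_iff]
  constructor
  · rintro ⟨⟨g, hg⟩, rfl⟩
    obtain ⟨u, hu⟩ := cycAut.exists_units_apply_eq hg
    refine ⟨u, ?_⟩
    rw [smul_eq, consecutiveDiffs, consecutiveDiffs, hu q.1, hu q.2.1, hu q.2.2]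
    simp [smul_sub]
  · rintro ⟨u, hu⟩
    refine ⟨⟨_, toPerm_trans_addLeft_mem_cycAut (p.1 - u • q.1) u⟩, ?_⟩
    simp only [consecutiveDiffs, Prod.smul_mk, Prod.ext_iff, smul_sub] at hu
    obtain ⟨h₁, h₂⟩ := hu
    rw [smul_eq]
    refine Prod.ext ?_ (Prod.ext ?_ ?_) <;>
      simp only [Equiv.trans_apply, toPerm_apply, Equiv.coe_addLeft]
    · ring
    · linear_combination h₁
    · linear_combination h₁ + h₂

end cycAut

theorem two_mul_card_orbitRel_cycAut (n : ℕ) [NeZero n] :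
    2 * Nat.card (orbitRel.Quotient (cycAut n) (ZMod n × ZMod n × ZMod n))
      = n ^ 2 + (if Even n then 2 else 1) ^ 2 := by
  rw [Nat.card_quotient_eq_of_surjective _ consecutiveDiffs_surjective cycAut_orbitRel_iff,
    two_mul_card_orbitRel_units_int, card_neg_eq_self_prod, ZMod.card_neg_eq_self, Nat.card_prod,
    Nat.card_zmod]
  ring

/-- the number of orbits of `Aut(Γ)` acting diagonally on triples of
vertices of the cycle is `2D² + 2` for the even cycle `n = 2D`, and `2D² + 2D + 1`
for the odd cycle `n = 2D + 1`. -/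
theorem stmt_6 (D n : ℕ) (hD : 2 ≤ D) (hn : n = 2 * D ∨ n = 2 * D + 1) :
    Nat.card (MulAction.orbitRel.Quotient (cycAut n) (ZMod n × ZMod n × ZMod n))
      = if n = 2 * D then 2 * D ^ 2 + 2 else 2 * D ^ 2 + 2 * D + 1 := by
  have : NeZero n := ⟨by omega⟩
  have h := two_mul_card_orbitRel_cycAut n
  rcases hn with rfl | rfl
  · simp only [even_two_mul, if_true] at h ⊢
    linarith
  · simp only [Nat.not_even_two_mul_add_one, if_false, show 2 * D + 1 ≠ 2 * D by omega] at h ⊢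
    linarith
end

section
/- Let D ≥ 2 and let Γ be the cycle graph on ZMod n with graph distance ∂. The number of distinct distance profiles, i.e. the cardinality of the image of the map (x,y,z) ↦ (∂(y,z), ∂(x,z), ∂(x,y)) on (ZMod n)³, equals 2D² + 2 if n = 2D, and equals 2D² + 2D + 1 if n = 2D + 1. -/
/-!
Seen from `x`, the vertices `y` and `z` lie at distances `a = ∂(x, y)` and `b = ∂(x, z)`,
each on one side of `x` or the other. On the same side `∂(y, z) = |a - b|`; on opposite
sides `∂(y, z) = min (a + b) (n - a - b)`, the length of the way around through `x`. Every
pair `a, b ≤ D` occurs in both configurations, so there are `2 (D + 1)²` profiles less the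
pairs on which the two values agree: those with `min a b = 0` and, when `n` is even, those
with `max a b = D`. Their complement is the square `[1, n - D - 1]²`, which leaves
`(D + 1)² + (n - D - 1)²` profiles.
-/

open Finset

/-- Graph distance in the cycle graph on `ZMod n`. -/
def cycDist (n : ℕ) (x y : ZMod n) : ℕ := min (x - y).val (n - (x - y).val)

def circDist (n i j : ℕ) : ℕ := min (i.dist j) (n - i.dist j)

theorem circDist_comm (n i j : ℕ) : circDist n i j = circDist n j i := by
  rw [circDist, circDist, Nat.dist_comm]

theorem circDist_zero_left_of_le {n i : ℕ} (h : 2 * i ≤ n) : circDist n 0 i = i := by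
  rw [circDist, Nat.dist_zero_left]; omega

theorem cycDist_natCast_of_le {n i j : ℕ} (hji : j ≤ i) (hi : i ≤ n) :
    cycDist n i j = circDist n i j := by
  have hsub : (i : ZMod n) - j = ((i - j : ℕ) : ZMod n) := (Nat.cast_sub hji).symm
  rw [cycDist, circDist, hsub]
  rcases (show i - j < n ∨ i - j = n by omega) with h | h
  · rw [ZMod.val_natCast_of_lt h]; unfold Nat.dist; omega
  · rw [h, ZMod.natCast_self, ZMod.val_zero]; unfold Nat.dist; omega

section Cycle

variable {n : ℕ} [NeZero n]

theorem cycDist_comm (x y : ZMod n) : cycDist n x y = cycDist n y x := by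
  have hlt := (x - y).val_lt
  rw [cycDist, cycDist, ← neg_sub x y, ZMod.neg_val]
  split_ifs with h
  · simp [h]
  · omega

theorem cycDist_natCast {i j : ℕ} (hi : i ≤ n) (hj : j ≤ n) :
    cycDist n i j = circDist n i j := by
  rcases le_total j i with h | h
  · exact cycDist_natCast_of_le h hi
  · rw [cycDist_comm, circDist_comm, cycDist_natCast_of_le h hj]

theorem cycDist_eq_circDist {x y : ZMod n} {i j : ℕ} (hi : i ≤ n) (hj : j ≤ n)
    (h : x - y = i - j) : cycDist n x y = circDist n i j := by
  rw [← cycDist_natCast hi hj, cycDist, cycDist, h]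

theorem sub_eq_cycDist_or_eq_neg (x y : ZMod n) :
    x - y = (cycDist n x y : ZMod n) ∨ x - y = -(cycDist n x y : ZMod n) := by
  rw [cycDist]
  rcases min_choice (x - y).val (n - (x - y).val) with h | h <;> rw [h]
  · exact Or.inl (ZMod.natCast_zmod_val _).symm
  · right
    rw [Nat.cast_sub (x - y).val_lt.le, ZMod.natCast_self, ZMod.natCast_zmod_val, zero_sub,
      neg_neg]

end Cycle

theorem Finset.card_image_prodMk_union_add_card_filter {α β : Type*} [DecidableEq α]
    [DecidableEq β] (s : Finset β) (f g : β → α) :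
    #(s.image (fun b => (f b, b)) ∪ s.image (fun b => (g b, b))) + #{b ∈ s | f b = g b} =
      2 * #s := by
  have hinj (h : β → α) : Function.Injective fun b => (h b, b) := fun _ _ e => congrArg Prod.snd e
  have hinter : s.image (fun b => (f b, b)) ∩ s.image (fun b => (g b, b)) =
      {b ∈ s | f b = g b}.image (fun b => (f b, b)) := by
    ext ⟨a, b⟩
    simp only [mem_inter, mem_image, mem_filter, Prod.mk.injEq]
    grind
  rw [← card_image_of_injective _ (hinj f), ← hinter, card_union_add_card_inter,
    card_image_of_injective _ (hinj f), card_image_of_injective _ (hinj g), two_mul]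

section Profiles

variable {D n : ℕ}

theorem cycDist_le (hn : n = 2 * D ∨ n = 2 * D + 1) (x y : ZMod n) : cycDist n x y ≤ D := by
  unfold cycDist; omega

theorem range_cycDist_profile [NeZero n] (hn : n = 2 * D ∨ n = 2 * D + 1) :
    Set.range (fun t : ZMod n × ZMod n × ZMod n =>
        (cycDist n t.2.1 t.2.2, cycDist n t.1 t.2.2, cycDist n t.1 t.2.1)) =
      ↑((Iic D ×ˢ Iic D).image (fun p => (circDist n p.1 p.2, p)) ∪
        (Iic D ×ˢ Iic D).image (fun p => (circDist n (p.1 + p.2) 0, p))) := by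
  ext ⟨c, b, a⟩
  simp only [Set.mem_range, coe_union, coe_image, coe_product, coe_Iic,
    Set.mem_union, Set.mem_image, Set.mem_prod, Set.mem_Iic, Prod.exists, Prod.mk.injEq]
  constructor
  · rintro ⟨x, y, z, rfl, rfl, rfl⟩
    have hb := cycDist_le hn x z
    have ha := cycDist_le hn x y
    have hsum : cycDist n x z + cycDist n x y ≤ n := by omega
    rcases sub_eq_cycDist_or_eq_neg x y with hy | hy <;>
      rcases sub_eq_cycDist_or_eq_neg x z with hz | hz
    · refine Or.inl ⟨_, _, ⟨hb, ha⟩, ?_, rfl, rfl⟩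
      exact (cycDist_eq_circDist (by omega) (by omega) (by linear_combination hz - hy)).symm
    · refine Or.inr ⟨_, _, ⟨hb, ha⟩, ?_, rfl, rfl⟩
      rw [circDist_comm]
      exact (cycDist_eq_circDist (by omega) hsum (by push_cast; linear_combination hz - hy)).symm
    · refine Or.inr ⟨_, _, ⟨hb, ha⟩, ?_, rfl, rfl⟩
      exact (cycDist_eq_circDist hsum (by omega) (by push_cast; linear_combination hz - hy)).symm
    · refine Or.inl ⟨_, _, ⟨hb, ha⟩, ?_, rfl, rfl⟩
      rw [circDist_comm]
      exact (cycDist_eq_circDist (by omega) (by omega) (by linear_combination hz - hy)).symm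
  · rintro (⟨b, a, ⟨hb, ha⟩, rfl, rfl, rfl⟩ | ⟨b, a, ⟨hb, ha⟩, rfl, rfl, rfl⟩)
    · refine ⟨0, a, b, ?_, ?_, ?_⟩
      · rw [cycDist_natCast (by omega) (by omega), circDist_comm]
      · rw [cycDist_eq_circDist (i := 0) (j := b) (by omega) (by omega) (by simp),
          circDist_zero_left_of_le (by omega)]
      · rw [cycDist_eq_circDist (i := 0) (j := a) (by omega) (by omega) (by simp),
          circDist_zero_left_of_le (by omega)]
    · refine ⟨0, a, -(b : ZMod n), ?_, ?_, ?_⟩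
      · exact cycDist_eq_circDist (by omega) (by omega) (by push_cast; ring)
      · rw [cycDist_eq_circDist (i := b) (j := 0) (by omega) (by omega) (by simp), circDist_comm,
          circDist_zero_left_of_le (by omega)]
      · rw [cycDist_eq_circDist (i := 0) (j := a) (by omega) (by omega) (by simp),
          circDist_zero_left_of_le (by omega)]

theorem filter_circDist_eq_sdiff (hn : n = 2 * D ∨ n = 2 * D + 1) :
    {p ∈ Iic D ×ˢ Iic D | circDist n p.1 p.2 = circDist n (p.1 + p.2) 0} =
      (Iic D ×ˢ Iic D) \ (Icc 1 (n - D - 1) ×ˢ Icc 1 (n - D - 1)) := by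
  ext ⟨a, b⟩
  simp only [mem_filter, mem_sdiff, mem_product, mem_Iic, mem_Icc, circDist, Nat.dist_zero_right]
  unfold Nat.dist
  rcases hn with rfl | rfl <;> omega

theorem card_filter_circDist_eq_add_sq (hn : n = 2 * D ∨ n = 2 * D + 1) :
    #{p ∈ Iic D ×ˢ Iic D | circDist n p.1 p.2 = circDist n (p.1 + p.2) 0} + (n - D - 1) ^ 2 =
      (D + 1) ^ 2 := by
  have hsub : Icc 1 (n - D - 1) ×ˢ Icc 1 (n - D - 1) ⊆ Iic D ×ˢ Iic D :=
    product_subset_product (fun a ha => by simp only [mem_Icc, mem_Iic] at ha ⊢; omega)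
      (fun a ha => by simp only [mem_Icc, mem_Iic] at ha ⊢; omega)
  have h := card_sdiff_add_card_eq_card hsub
  rw [card_product, card_product, Nat.card_Icc, Nat.card_Iic, Nat.add_sub_cancel] at h
  rw [filter_circDist_eq_sdiff hn, sq, sq, h]

end Profiles

/-- the number of distinct distance profiles
`(∂(y,z), ∂(x,z), ∂(x,y))` of triples of vertices of the cycle is `2D² + 2` for the
even cycle `n = 2D`, and `2D² + 2D + 1` for the odd cycle `n = 2D + 1`. -/
theorem stmt_7 (D n : ℕ) (hD : 2 ≤ D) (hn : n = 2 * D ∨ n = 2 * D + 1) :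
    Set.ncard (Set.range (fun t : ZMod n × ZMod n × ZMod n =>
        (cycDist n t.2.1 t.2.2, cycDist n t.1 t.2.2, cycDist n t.1 t.2.1)))
      = if n = 2 * D then 2 * D ^ 2 + 2 else 2 * D ^ 2 + 2 * D + 1 := by
  have : NeZero n := ⟨by omega⟩
  have hsplit := card_image_prodMk_union_add_card_filter (Iic D ×ˢ Iic D)
    (fun p => circDist n p.1 p.2) (fun p => circDist n (p.1 + p.2) 0)
  have hagree := card_filter_circDist_eq_add_sq hn
  rw [card_product, Nat.card_Iic] at hsplit
  rw [range_cycDist_profile hn, Set.ncard_coe_finset]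
  rcases hn with rfl | rfl
  · obtain ⟨m, rfl⟩ : ∃ m, D = m + 1 := ⟨D - 1, by omega⟩
    rw [if_pos rfl]
    rw [show 2 * (m + 1) - (m + 1) - 1 = m by omega] at hagree
    nlinarith
  · rw [if_neg (by omega)]
    rw [show 2 * D + 1 - D - 1 = D by omega] at hagree
    nlinarith
end

section
/- Let D ≥ 2, n = 2D or n = 2D+1, ζ = exp(2πi/n), and let ∂ be the graph distance on the cycle on ZMod n. For r,s,t ∈ {0,…,D} let Ω(r,s,t) = {(x,y,z) ∈ (ZMod n)³ : ∂(y,z)=r, ∂(x,z)=s, ∂(x,y)=t}, let P_{r,s,t} be its indicator function, and assume Ω(r,s,t) is nonempty. Let Q_{h,i,j}(u,v,w) = n · Σ_{x ∈ ZMod n} (E_h)_{u x} (E_i)_{v x} (E_j)_{w x}, and let ⟨f,g⟩ = Σ_{(x,y,z) ∈ (ZMod n)³} conj(f(x,y,z)) · g(x,y,z). Then for all h,i,j,r,s,t ∈ {0,…,D}: n · ⟨Q_{h,i,j}, P_{r,s,t}⟩ = |Ω(r,s,t)|^{-1} · (Σ_{(u,w,z) ∈ Ω(r,s,t)} ζ̃(u,h)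 ζ̃(w,i) ζ̃(z,j)) · ‖P_{r,s,t}‖², where ‖P_{r,s,t}‖² = ⟨P_{r,s,t}, P_{r,s,t}⟩. -/
/-- The indicator function `P_{r,s,t}` of the set of triples with distance profile
`(r,s,t)`. -/
noncomputable def Pfun (n : ℕ) (r s t : ℕ) : ZMod n × ZMod n × ZMod n → ℂ := fun p =>
  if cycDist n p.2.1 p.2.2 = r ∧ cycDist n p.1 p.2.2 = s ∧ cycDist n p.1 p.2.1 = t
  then 1 else 0

/-- The set `Ω(r,s,t)` of triples with distance profile `(r,s,t)`, as a `Finset`. -/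
def OmegaFinset (n : ℕ) [NeZero n] (r s t : ℕ) : Finset (ZMod n × ZMod n × ZMod n) :=
  Finset.univ.filter fun p =>
    cycDist n p.2.1 p.2.2 = r ∧ cycDist n p.1 p.2.2 = s ∧ cycDist n p.1 p.2.1 = t

/-- The primitive idempotent matrices `E_0, …, E_D` of the cycle on `ZMod n`. -/
noncomputable def Emat (D n : ℕ) (ζ : ℂ) (j : ℕ) : Matrix (ZMod n) (ZMod n) ℂ :=
  Matrix.of fun x y =>
    if j = 0 then 1 / n
    else if n = 2 * D ∧ j = D then ζ ^ ((x - y).val * D) / n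
    else (ζ ^ ((x - y).val * j) + ζ ^ (-(((x - y).val * j : ℕ) : ℤ))) / n

/-- The function `Q_{h,i,j}(u,v,w) = n · Σ_x (E_h)_{ux} (E_i)_{vx} (E_j)_{wx}`. -/
noncomputable def Qfun (D n : ℕ) [NeZero n] (ζ : ℂ) (h i j : ℕ) :
    ZMod n × ZMod n × ZMod n → ℂ := fun t =>
  n * ∑ x : ZMod n, Emat D n ζ h t.1 x * Emat D n ζ i t.2.1 x * Emat D n ζ j t.2.2 x

/-- The scalars `ζ̃(x,k)`: `ζ̃(x,0) = 1`; for `n = 2D`, `ζ̃(x,D) = ζ^{xD}` and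
`ζ̃(x,k) = ζ^{xk} + ζ^{-xk}` for `1 ≤ k ≤ D-1`; for `n = 2D+1`,
`ζ̃(x,k) = ζ^{xk} + ζ^{-xk}` for `1 ≤ k ≤ D`. -/
noncomputable def zetaTilde (D n : ℕ) (ζ : ℂ) (x : ZMod n) (k : ℕ) : ℂ :=
  if k = 0 then 1
  else if n = 2 * D ∧ k = D then ζ ^ (x.val * D)
  else ζ ^ (x.val * k) + ζ ^ (-((x.val * k : ℕ) : ℤ))

/-- The Hermitian inner product `⟨f,g⟩ = Σ_t conj (f t) * g t` on functions on triples. -/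
noncomputable def innerT (n : ℕ) [NeZero n]
    (f g : ZMod n × ZMod n × ZMod n → ℂ) : ℂ :=
  ∑ t : ZMod n × ZMod n × ZMod n, (starRingEnd ℂ) (f t) * g t

open ComplexConjugate

theorem Finset.sum_comp_sub_of_sub_mem_iff {A M : Type*} [AddGroup A] [AddCommMonoid M]
    {S : Finset A} {d : A} (hS : ∀ p, p - d ∈ S ↔ p ∈ S) (f : A → M) :
    ∑ p ∈ S, f (p - d) = ∑ p ∈ S, f p :=
  Finset.sum_equiv (Equiv.subRight d) (fun p => (hS p).symm) fun _ _ => rfl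

theorem cycDist_sub_right {n : ℕ} (a b x : ZMod n) :
    cycDist n (a - x) (b - x) = cycDist n a b := by
  simp [cycDist]

section

variable {n : ℕ} [NeZero n]

theorem sub_diag_mem_OmegaFinset_iff (r s t : ℕ) (p : ZMod n × ZMod n × ZMod n) (x : ZMod n) :
    p - (x, x, x) ∈ OmegaFinset n r s t ↔ p ∈ OmegaFinset n r s t := by
  simp [OmegaFinset, cycDist_sub_right]

theorem innerT_Pfun (r s t : ℕ) (f : ZMod n × ZMod n × ZMod n → ℂ) :
    innerT n f (Pfun n r s t) = ∑ p ∈ OmegaFinset n r s t, conj (f p) := by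
  simp [innerT, OmegaFinset, Pfun, Finset.sum_filter]

theorem innerT_Pfun_self (r s t : ℕ) :
    innerT n (Pfun n r s t) (Pfun n r s t) = (OmegaFinset n r s t).card := by
  rw [innerT_Pfun, Finset.card_eq_sum_ones, Nat.cast_sum]
  refine Finset.sum_congr rfl fun p hp => ?_
  simp_all [OmegaFinset, Pfun]

end

section

variable {D n : ℕ} {ζ : ℂ}

theorem Emat_apply (k : ℕ) (x y : ZMod n) :
    Emat D n ζ k x y = zetaTilde D n ζ (x - y) k / n := by
  simp only [Emat, zetaTilde, Matrix.of_apply]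
  split_ifs <;> simp

variable [NeZero n]

theorem conj_zetaTilde (hζ : ζ ^ n = 1) (x : ZMod n) (k : ℕ) :
    conj (zetaTilde D n ζ x k) = zetaTilde D n ζ x k := by
  have hconj : conj ζ = ζ⁻¹ :=
    (Complex.inv_eq_conj (Complex.norm_eq_one_of_pow_eq_one hζ (NeZero.ne n))).symm
  unfold zetaTilde
  split_ifs with h0 hD
  · simp
  · have hself : (ζ ^ D)⁻¹ = ζ ^ D :=
      inv_eq_of_mul_eq_one_left (by rw [← pow_add, ← two_mul, ← hD.1, hζ])
    rw [map_pow, hconj, mul_comm, pow_mul, inv_pow, hself, pow_mul]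
  · rw [map_add, map_pow, map_zpow₀, hconj, inv_pow, inv_zpow', neg_neg, zpow_natCast,
      ← zpow_natCast, ← zpow_neg, add_comm]

theorem conj_Emat (hζ : ζ ^ n = 1) (k : ℕ) (x y : ZMod n) :
    conj (Emat D n ζ k x y) = Emat D n ζ k x y := by
  rw [Emat_apply, map_div₀, conj_zetaTilde hζ, Complex.conj_natCast]

theorem conj_Qfun (hζ : ζ ^ n = 1) (h i j : ℕ) (p : ZMod n × ZMod n × ZMod n) :
    conj (Qfun D n ζ h i j p) = Qfun D n ζ h i j p := by
  simp only [Qfun, map_mul, map_sum, Complex.conj_natCast, conj_Emat hζ]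

theorem natCast_mul_Qfun (h i j : ℕ) (p : ZMod n × ZMod n × ZMod n) :
    n * Qfun D n ζ h i j p = (n : ℂ)⁻¹ * ∑ x : ZMod n,
      zetaTilde D n ζ (p.1 - x) h * zetaTilde D n ζ (p.2.1 - x) i
        * zetaTilde D n ζ (p.2.2 - x) j := by
  have hn : (n : ℂ) ≠ 0 := Nat.cast_ne_zero.mpr (NeZero.ne n)
  simp only [Qfun, Emat_apply, Finset.mul_sum]
  refine Finset.sum_congr rfl fun x _ => ?_
  field_simp

end

theorem stmt_16_general (D n : ℕ) [NeZero n]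
    (ζ : ℂ) (hζ : ζ = Complex.exp (2 * Real.pi * Complex.I / n)) :
    ∀ h i j r s t : ℕ, h ≤ D → i ≤ D → j ≤ D → r ≤ D → s ≤ D → t ≤ D →
      (OmegaFinset n r s t).Nonempty →
      (n : ℂ) * innerT n (Qfun D n ζ h i j) (Pfun n r s t)
        = ((OmegaFinset n r s t).card : ℂ)⁻¹
          * (∑ p ∈ OmegaFinset n r s t,
              zetaTilde D n ζ p.1 h * zetaTilde D n ζ p.2.1 i * zetaTilde D n ζ p.2.2 j)
          * innerT n (Pfun n r s t) (Pfun n r s t) := by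
  intro h i j r s t _ _ _ _ _ _ hne
  have hζn : ζ ^ n = 1 := hζ ▸ (Complex.isPrimitiveRoot_exp n (NeZero.ne n)).pow_eq_one
  have hn : (n : ℂ) ≠ 0 := Nat.cast_ne_zero.mpr (NeZero.ne n)
  have hcard : ((OmegaFinset n r s t).card : ℂ) ≠ 0 := by exact_mod_cast hne.card_ne_zero
  set F : ZMod n × ZMod n × ZMod n → ℂ := fun q =>
    zetaTilde D n ζ q.1 h * zetaTilde D n ζ q.2.1 i * zetaTilde D n ζ q.2.2 j
  have htranslate (x : ZMod n) :
      ∑ p ∈ OmegaFinset n r s t, F (p - (x, x, x)) = ∑ p ∈ OmegaFinset n r s t, F p :=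
    Finset.sum_comp_sub_of_sub_mem_iff (sub_diag_mem_OmegaFinset_iff r s t · x) F
  rw [innerT_Pfun, innerT_Pfun_self, mul_right_comm, inv_mul_cancel₀ hcard, one_mul]
  calc (n : ℂ) * ∑ p ∈ OmegaFinset n r s t, conj (Qfun D n ζ h i j p)
      = ∑ p ∈ OmegaFinset n r s t, (n : ℂ)⁻¹ * ∑ x : ZMod n, F (p - (x, x, x)) := by
        rw [Finset.mul_sum]
        refine Finset.sum_congr rfl fun p _ => ?_
        rw [conj_Qfun hζn, natCast_mul_Qfun]
        rfl
    _ = (n : ℂ)⁻¹ * ∑ x : ZMod n, ∑ p ∈ OmegaFinset n r s t, F (p - (x, x, x)) := by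
        rw [← Finset.mul_sum, Finset.sum_comm]
    _ = ∑ p ∈ OmegaFinset n r s t, F p := by
        simp only [htranslate, Finset.sum_const, Finset.card_univ, ZMod.card, nsmul_eq_mul]
        field_simp

/-- the transition formula expressing `⟨Q_{h,i,j}, P_{r,s,t}⟩` in terms
of the scalars `ζ̃`:
`n⟨Q_{h,i,j}, P_{r,s,t}⟩ = |Ω(r,s,t)|⁻¹ (Σ_{(u,w,z) ∈ Ω(r,s,t)} ζ̃(u,h)ζ̃(w,i)ζ̃(z,j)) ‖P_{r,s,t}‖²`. -/
theorem stmt_16 (D n : ℕ) (hD : 2 ≤ D) (hn : n = 2 * D ∨ n = 2 * D + 1) [NeZero n]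
    (ζ : ℂ) (hζ : ζ = Complex.exp (2 * Real.pi * Complex.I / n)) :
    ∀ h i j r s t : ℕ, h ≤ D → i ≤ D → j ≤ D → r ≤ D → s ≤ D → t ≤ D →
      (OmegaFinset n r s t).Nonempty →
      (n : ℂ) * innerT n (Qfun D n ζ h i j) (Pfun n r s t)
        = ((OmegaFinset n r s t).card : ℂ)⁻¹
          * (∑ p ∈ OmegaFinset n r s t,
              zetaTilde D n ζ p.1 h * zetaTilde D n ζ p.2.1 i * zetaTilde D n ζ p.2.2 j)
          * innerT n (Pfun n r s t) (Pfun n r s t) :=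
  stmt_16_general D n ζ hζ
end
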